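/- arXiv:2204.02087 — 3 statements merged into one kernel-verified Lean document; each statement's English description precedes it below -/
import Mathlib

section
/- Let λ ∈ ℝ^n with λ_1 > 0 > λ_n and x⁰ ∈ ℝ^n with all x⁰_i > 0, and set e₁ = −1/λ_1, e₂ = −1/λ_n. The function f(μ) = Σ_i λ_i (x⁰_i/(1 + μ λ_i))² − 1 has exactly one zero on (e₁, e₂). -/
/-!
The secular function `μ ↦ ∑ λᵢ (x⁰ᵢ / (1 + μ λᵢ))²` is strictly decreasing wherever all the
denominators are positive, since each summand has derivative `-2 λᵢ² x⁰ᵢ² / (1 + μ λᵢ)³`; by the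
ordering of the `λᵢ` this is the case on the whole interval `(e₁, e₂)`. Near `e₁` the summand of
`λ₁` blows up to `+∞` while, for `μ ≤ 0`, every summand is bounded below by `min 0 (λᵢ x⁰ᵢ²)`.
Replacing `(λ, μ)` by `(-λ, -μ)` negates the function and exchanges the two ends, so it tends to
`-∞` near `e₂`. The intermediate value theorem gives a zero of `f`, and strict monotonicity makes
it unique.
-/

open Filter Topology Set

noncomputable def secularTerm (l x μ : ℝ) : ℝ := l * (x / (1 + μ * l)) ^ 2

noncomputable def secular {ι : Type*} [Fintype ι] (lam x : ι → ℝ) (μ : ℝ) : ℝ :=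
  ∑ i, secularTerm (lam i) (x i) μ

lemma one_add_mul_pos {a b t μ : ℝ} (hb : b < 0) (ha : 0 < a) (hμ : μ ∈ Ioo (-1 / a) (-1 / b))
    (hbt : b ≤ t) (hta : t ≤ a) : 0 < 1 + μ * t := by
  have h₁ := (div_lt_iff₀ ha).1 hμ.1
  have h₂ := (lt_div_iff_of_neg hb).1 hμ.2
  rcases le_or_gt 0 μ with h | h <;> nlinarith

lemma secularTerm_neg (l x μ : ℝ) : secularTerm (-l) x (-μ) = -secularTerm l x μ := by
  rw [secularTerm, secularTerm, neg_mul_neg, neg_mul]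

lemma secularTerm_le_of_le {l x p q : ℝ} (hp : 0 < 1 + p * l) (hq : 0 < 1 + q * l) (hpq : p ≤ q) :
    secularTerm l x q ≤ secularTerm l x p := by
  have key : 0 ≤ (q - p) * (l * x) ^ 2 * ((1 + p * l) + (1 + q * l)) := by
    have := sub_nonneg.2 hpq
    positivity
  rw [secularTerm, secularTerm, div_pow, div_pow, mul_div_assoc', mul_div_assoc',
    div_le_div_iff₀ (by positivity) (by positivity)]
  linear_combination key

lemma secularTerm_lt_of_lt {l x p q : ℝ} (hl : l ≠ 0) (hx : x ≠ 0) (hp : 0 < 1 + p * l)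
    (hq : 0 < 1 + q * l) (hpq : p < q) : secularTerm l x q < secularTerm l x p := by
  have key : 0 < (q - p) * (l * x) ^ 2 * ((1 + p * l) + (1 + q * l)) := by
    have := sub_pos.2 hpq
    have := mul_ne_zero hl hx
    positivity
  rw [secularTerm, secularTerm, div_pow, div_pow, mul_div_assoc', mul_div_assoc',
    div_lt_div_iff₀ (by positivity) (by positivity)]
  linear_combination key

lemma min_zero_le_secularTerm {μ : ℝ} (l x : ℝ) (hμ : μ ≤ 0) :
    min 0 (l * x ^ 2) ≤ secularTerm l x μ := by
  rcases le_or_gt 0 l with hl | hl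
  · exact (min_le_left _ _).trans (mul_nonneg hl (sq_nonneg _))
  · have hd : 1 ≤ 1 + μ * l := by nlinarith
    have hsq : (x / (1 + μ * l)) ^ 2 ≤ x ^ 2 := by
      rw [div_pow]
      exact div_le_self (sq_nonneg _) (one_le_pow₀ hd)
    exact (min_le_right _ _).trans (mul_le_mul_of_nonpos_left hsq hl.le)

lemma tendsto_secularTerm_nhdsGT {l : ℝ} (x : ℝ) (hl : 0 < l) (hx : x ≠ 0) :
    Tendsto (secularTerm l x) (𝓝[>] (-1 / l)) atTop := by
  have hden : Tendsto (fun μ => 1 + μ * l) (𝓝[>] (-1 / l)) (𝓝[>] 0) := by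
    refine tendsto_nhdsWithin_of_tendsto_nhds_of_eventually_within _ ?_ ?_
    · have h0 : 1 + -1 / l * l = 0 := by rw [div_mul_cancel₀ _ hl.ne']; norm_num
      have hc : Continuous fun μ => 1 + μ * l := by fun_prop
      exact h0 ▸ (hc.tendsto (-1 / l)).mono_left nhdsWithin_le_nhds
    · filter_upwards [self_mem_nhdsWithin] with μ hμ
      have := (div_lt_iff₀ hl).1 hμ
      rw [mem_Ioi]
      linarith
  have hinv := (tendsto_pow_atTop two_ne_zero).comp (tendsto_inv_nhdsGT_zero.comp hden)
  refine (hinv.const_mul_atTop (by positivity : 0 < l * x ^ 2)).congr fun μ => ?_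
  rw [Function.comp_apply, Function.comp_apply, secularTerm, div_pow, div_eq_mul_inv, inv_pow]
  ring

section

variable {ι : Type*} [Fintype ι] {lam x : ι → ℝ}

lemma secular_neg (lam x : ι → ℝ) (μ : ℝ) : secular (-lam) x (-μ) = -secular lam x μ := by
  simp only [secular, Pi.neg_apply, secularTerm_neg, Finset.sum_neg_distrib]

lemma tendsto_secular_nhdsGT {i₀ : ι} (hpos : 0 < lam i₀) (hx : x i₀ ≠ 0) :
    Tendsto (secular lam x) (𝓝[>] (-1 / lam i₀)) atTop := by
  classical
  have hrest : ∀ᶠ μ in 𝓝[>] (-1 / lam i₀),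
      ∑ i ∈ Finset.univ.erase i₀, min 0 (lam i * x i ^ 2) ≤
        ∑ i ∈ Finset.univ.erase i₀, secularTerm (lam i) (x i) μ := by
    have hneg : Iio 0 ∈ 𝓝[>] (-1 / lam i₀) :=
      nhdsWithin_le_nhds (Iio_mem_nhds (div_neg_of_neg_of_pos neg_one_lt_zero hpos))
    filter_upwards [hneg] with μ hμ
    exact Finset.sum_le_sum fun i _ => min_zero_le_secularTerm _ _ (le_of_lt hμ)
  have := tendsto_atTop_add_left_of_le' _ _ hrest (tendsto_secularTerm_nhdsGT (x i₀) hpos hx)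
  simp only [Finset.sum_erase_add _ _ (Finset.mem_univ i₀)] at this
  exact this

lemma tendsto_secular_nhdsLT {iN : ι} (hneg : lam iN < 0) (hx : x iN ≠ 0) :
    Tendsto (secular lam x) (𝓝[<] (-1 / lam iN)) atBot := by
  have h := tendsto_secular_nhdsGT (lam := -lam) (i₀ := iN) (neg_pos.2 hneg) hx
  rw [Pi.neg_apply, div_neg] at h
  have := tendsto_neg_atTop_atBot.comp (h.comp (neg_neg (-1 / lam iN) ▸ tendsto_neg_nhdsLT_neg))
  simpa only [Function.comp_def, secular_neg, neg_neg] using this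

lemma strictAntiOn_secular {s : Set ℝ} (hs : ∀ μ ∈ s, ∀ i, 0 < 1 + μ * lam i) {i₀ : ι}
    (hl : lam i₀ ≠ 0) (hx : x i₀ ≠ 0) : StrictAntiOn (secular lam x) s := fun p hp q hq hpq =>
  Finset.sum_lt_sum (fun i _ => secularTerm_le_of_le (hs p hp i) (hs q hq i) hpq.le)
    ⟨i₀, Finset.mem_univ _, secularTerm_lt_of_lt hl hx (hs p hp i₀) (hs q hq i₀) hpq⟩

lemma continuousOn_secular {s : Set ℝ} (hs : ∀ μ ∈ s, ∀ i, 1 + μ * lam i ≠ 0) :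
    ContinuousOn (secular lam x) s :=
  continuousOn_finsetSum _ fun i _ => continuousOn_const.mul
    ((continuousOn_const.div (by fun_prop) fun μ hμ => hs μ hμ i).pow 2)

end

theorem stmt_8_general (n : ℕ) (hn : 0 < n) (lam x0 : Fin n → ℝ)
    (hsort : ∀ i j : Fin n, i ≤ j → lam j ≤ lam i)
    (hfirst : 0 < lam ⟨0, hn⟩) (hlast : lam ⟨n - 1, Nat.sub_lt hn one_pos⟩ < 0)
    (hx0 : ∀ i, 0 < x0 i) :
    ∃! μ : ℝ, μ ∈ Set.Ioo (-1 / lam ⟨0, hn⟩) (-1 / lam ⟨n - 1, Nat.sub_lt hn one_pos⟩) ∧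
      ∑ i, lam i * (x0 i / (1 + μ * lam i)) ^ 2 - 1 = 0 := by
  set I := Ioo (-1 / lam ⟨0, hn⟩) (-1 / lam ⟨n - 1, Nat.sub_lt hn one_pos⟩)
  have hden : ∀ μ ∈ I, ∀ i, 0 < 1 + μ * lam i := fun μ hμ i =>
    one_add_mul_pos hlast hfirst hμ (hsort _ _ (Fin.le_def.2 (Nat.le_sub_one_of_lt i.isLt)))
      (hsort _ _ (Fin.le_def.2 (Nat.zero_le _)))
  have hI : -1 / lam ⟨0, hn⟩ < -1 / lam ⟨n - 1, Nat.sub_lt hn one_pos⟩ :=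
    (div_neg_of_neg_of_pos neg_one_lt_zero hfirst).trans
      (div_pos_of_neg_of_neg neg_one_lt_zero hlast)
  have hcont := continuousOn_secular (x := x0) fun μ hμ i => (hden μ hμ i).ne'
  obtain ⟨μ, hμ, hμ1⟩ := hcont.surjOn_of_tendsto' (nonempty_Ioo.2 hI)
    ((tendsto_comp_coe_Ioo_atBot hI).2 (tendsto_secular_nhdsGT hfirst (hx0 _).ne'))
    ((tendsto_comp_coe_Ioo_atTop hI).2 (tendsto_secular_nhdsLT hlast (hx0 _).ne')) (mem_univ 1)
  have hinj := (strictAntiOn_secular (x := x0) hden hfirst.ne' (hx0 _).ne').injOn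
  exact ⟨μ, ⟨hμ, sub_eq_zero.2 hμ1⟩, fun ν ⟨hν, hν1⟩ =>
    hinj hν hμ ((sub_eq_zero.1 hν1).trans hμ1.symm)⟩

theorem stmt_8 (n : ℕ) (hn : 0 < n) (lam x0 : Fin n → ℝ)
    (hsort : ∀ i j : Fin n, i ≤ j → lam j ≤ lam i)
    (hne : ∀ i, lam i ≠ 0)
    (hfirst : 0 < lam ⟨0, hn⟩) (hlast : lam ⟨n - 1, Nat.sub_lt hn one_pos⟩ < 0)
    (hx0 : ∀ i, 0 < x0 i) :
    ∃! μ : ℝ, μ ∈ Set.Ioo (-1 / lam ⟨0, hn⟩) (-1 / lam ⟨n - 1, Nat.sub_lt hn one_pos⟩) ∧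
      ∑ i, lam i * (x0 i / (1 + μ * lam i)) ^ 2 - 1 = 0 :=
  stmt_8_general n hn lam x0 hsort hfirst hlast hx0
end

section
/- Let λ ∈ ℝ^n with λ_1 > 0 > λ_n and x⁰ ∈ ℝ^n with all x⁰_i > 0. The function f(μ) = Σ_i λ_i (x⁰_i/(1 + μ λ_i))² − 1 has exactly one inflexion point on (e₁, e₂) = (−1/λ_1, −1/λ_n): there is a unique μ^I ∈ (e₁, e₂) with f''(μ^I) = 0. -/
/-!
On `(e₁, e₂)` every `1 + μ λᵢ` is positive and `f'' = ∑ᵢ 6 x⁰ᵢ² λᵢ³ / (1 + μ λᵢ)⁴`. Each summand is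
nonincreasing in `μ`, strictly when `λᵢ ≠ 0`, so `f''` is strictly decreasing. At `e₁⁺` the summand
of `λ₁` tends to `+∞` while the others stay bounded below, so `f'' → +∞`; reflecting `λ ↦ -λ`,
`μ ↦ -μ` gives `f'' → -∞` at `e₂⁻`. The intermediate value theorem then yields exactly one zero.
-/

open Filter Topology Set

theorem hasDerivAt_div_one_add_mul_pow (c a : ℝ) (k : ℕ) {t : ℝ} (ht : 1 + t * a ≠ 0) :
    HasDerivAt (fun s => c / (1 + s * a) ^ k) (-(k * a * c) / (1 + t * a) ^ (k + 1)) t := by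
  have hlin : HasDerivAt (fun s => 1 + s * a) a t := by
    simpa using ((hasDerivAt_id t).mul_const a).const_add 1
  refine ((hasDerivAt_const t c).div (hlin.fun_pow k) (pow_ne_zero k ht)).congr_deriv ?_
  rcases k with _ | k
  · simp
  · simp only [Nat.add_sub_cancel]
    field_simp
    ring

theorem strictAntiOn_pow_three_div_one_add_mul_pow_four {a : ℝ} (ha : a ≠ 0) :
    StrictAntiOn (fun t => a ^ 3 / (1 + t * a) ^ 4) {t | 0 < 1 + t * a} := by
  intro s hs t ht hst
  simp only [mem_ofPred_eq] at hs ht ⊢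
  rcases ha.lt_or_gt with ha | ha
  · have hden : (1 + t * a) ^ 4 < (1 + s * a) ^ 4 :=
      pow_lt_pow_left₀ (by nlinarith) ht.le (by norm_num)
    rw [div_lt_div_iff₀ (by positivity) (by positivity)]
    nlinarith [pow_pos (neg_pos.2 ha) 3]
  · have hden : (1 + s * a) ^ 4 < (1 + t * a) ^ 4 :=
      pow_lt_pow_left₀ (by nlinarith) hs.le (by norm_num)
    exact div_lt_div_of_pos_left (by positivity) (by positivity) hden

theorem antitoneOn_pow_three_div_one_add_mul_pow_four (a : ℝ) :
    AntitoneOn (fun t => a ^ 3 / (1 + t * a) ^ 4) {t | 0 < 1 + t * a} := by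
  rcases eq_or_ne a 0 with rfl | ha
  · intro s _ t _ _
    simp
  · exact (strictAntiOn_pow_three_div_one_add_mul_pow_four ha).antitoneOn

theorem tendsto_pow_three_div_one_add_mul_pow_four {a : ℝ} (ha : 0 < a) :
    Tendsto (fun t => a ^ 3 / (1 + t * a) ^ 4) (𝓝[>] (-1 / a)) atTop := by
  have hden : Tendsto (fun t => (1 + t * a) ^ 4) (𝓝[>] (-1 / a)) (𝓝[>] 0) := by
    refine tendsto_nhdsWithin_of_tendsto_nhds_of_eventually_within _ ?_ ?_
    · have h := (show Continuous fun t => (1 + t * a) ^ 4 by fun_prop).tendsto (-1 / a)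
      convert h.mono_left nhdsWithin_le_nhds using 2
      field_simp
      ring
    · filter_upwards [self_mem_nhdsWithin] with t (ht : -1 / a < t)
      rw [div_lt_iff₀ ha] at ht
      exact pow_pos (show 0 < 1 + t * a by linarith) 4
  simpa [div_eq_mul_inv] using (tendsto_inv_nhdsGT_zero.comp hden).const_mul_atTop (by positivity)

theorem min_zero_pow_three_le_div_one_add_mul_pow_four {a t : ℝ} (ht : t ≤ 0)
    (hpos : 0 < 1 + t * a) : min 0 (a ^ 3) ≤ a ^ 3 / (1 + t * a) ^ 4 := by
  rcases le_or_gt 0 a with ha | ha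
  · exact (min_le_left _ _).trans (by positivity)
  · refine (min_le_right _ _).trans ?_
    have h1 : 1 ≤ (1 + t * a) ^ 4 := one_le_pow₀ (by nlinarith)
    rw [le_div_iff₀ (by positivity)]
    nlinarith [pow_pos (neg_pos.2 ha) 3]

theorem tendsto_sum_atTop_of_tendsto_of_eventually_ge {ι α : Type*} [Fintype ι] {l : Filter α}
    {F : ι → α → ℝ} (i₀ : ι) (hi₀ : Tendsto (F i₀) l atTop)
    (hbdd : ∀ i, ∃ C, ∀ᶠ x in l, C ≤ F i x) : Tendsto (fun x => ∑ i, F i x) l atTop := by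
  classical
  choose C hC using hbdd
  have hsum : Tendsto (fun x => (∑ i ∈ Finset.univ.erase i₀, F i x) + F i₀ x) l atTop :=
    tendsto_atTop_add_left_of_le' l (∑ i ∈ Finset.univ.erase i₀, C i)
      ((eventually_all.2 hC).mono fun x hx => Finset.sum_le_sum fun i _ => hx i) hi₀
  refine hsum.congr fun x => ?_
  rw [add_comm]
  exact Finset.add_sum_erase _ (fun i => F i x) (Finset.mem_univ i₀)

theorem existsUnique_mem_Ioo_eq_zero {g : ℝ → ℝ} {a b : ℝ} (hab : a < b)
    (hcont : ContinuousOn g (Ioo a b)) (hanti : StrictAntiOn g (Ioo a b))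
    (htop : Tendsto g (𝓝[>] a) atTop) (hbot : Tendsto g (𝓝[<] b) atBot) :
    ∃! x, x ∈ Ioo a b ∧ g x = 0 := by
  obtain ⟨p, hgp, hp⟩ := ((htop.eventually_gt_atTop 0).and (Ioo_mem_nhdsGT hab)).exists
  obtain ⟨q, hgq, hq⟩ := ((hbot.eventually_lt_atBot 0).and (Ioo_mem_nhdsLT hab)).exists
  obtain ⟨x, hx, hgx⟩ := hcont.surjOn_Icc hq hp ⟨hgq.le, hgp.le⟩
  exact ⟨x, ⟨hx, hgx⟩, fun y hy => hanti.injOn hy.1 hx (hy.2.trans hgx.symm)⟩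

theorem one_add_mul_pos_of_mem_Ioo {ι : Type*} {lam : ι → ℝ} {i₀ i₁ : ι}
    (hmax : ∀ i, lam i ≤ lam i₀) (hmin : ∀ i, lam i₁ ≤ lam i) (hpos : 0 < lam i₀)
    (hneg : lam i₁ < 0) {μ : ℝ} (hμ : μ ∈ Ioo (-1 / lam i₀) (-1 / lam i₁)) (i : ι) :
    0 < 1 + μ * lam i := by
  obtain ⟨h₀, h₁⟩ := hμ
  rw [div_lt_iff₀ hpos] at h₀
  rw [lt_div_iff_of_neg hneg] at h₁
  rcases le_total μ 0 with hμ | hμ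
  · nlinarith [hmax i]
  · nlinarith [hmin i]

section Secular

variable {ι : Type*} [Fintype ι] (lam x0 : ι → ℝ)

noncomputable def secularFun (t : ℝ) : ℝ := ∑ i, lam i * (x0 i / (1 + t * lam i)) ^ 2 - 1

noncomputable def secularSecondDeriv (t : ℝ) : ℝ :=
  ∑ i, 6 * x0 i ^ 2 * (lam i ^ 3 / (1 + t * lam i) ^ 4)

variable {lam x0}

theorem hasDerivAt_secularFun {μ : ℝ} (hμ : ∀ i, 1 + μ * lam i ≠ 0) :
    HasDerivAt (secularFun lam x0) (∑ i, -2 * x0 i ^ 2 * (lam i ^ 2 / (1 + μ * lam i) ^ 3)) μ := by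
  refine (HasDerivAt.fun_sum fun i _ => ?_).sub_const 1
  have hterm : (fun t => lam i * (x0 i / (1 + t * lam i)) ^ 2) =
      fun t => lam i * x0 i ^ 2 / (1 + t * lam i) ^ 2 := by
    funext t
    rw [div_pow, mul_div_assoc]
  rw [hterm]
  refine (hasDerivAt_div_one_add_mul_pow _ _ 2 (hμ i)).congr_deriv ?_
  push_cast
  ring

theorem hasDerivAt_secularFirstDeriv {μ : ℝ} (hμ : ∀ i, 1 + μ * lam i ≠ 0) :
    HasDerivAt (fun t => ∑ i, -2 * x0 i ^ 2 * (lam i ^ 2 / (1 + t * lam i) ^ 3))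
      (secularSecondDeriv lam x0 μ) μ := by
  refine HasDerivAt.fun_sum fun i _ => ?_
  refine ((hasDerivAt_div_one_add_mul_pow _ _ 3 (hμ i)).const_mul (-2 * x0 i ^ 2)).congr_deriv ?_
  push_cast
  ring

theorem deriv_deriv_secularFun {μ : ℝ} (hμ : ∀ i, 1 + μ * lam i ≠ 0) :
    deriv (deriv (secularFun lam x0)) μ = secularSecondDeriv lam x0 μ := by
  have hnear : ∀ᶠ t in 𝓝 μ, ∀ i, 1 + t * lam i ≠ 0 :=
    eventually_all.2 fun i =>
      (show Continuous fun t => 1 + t * lam i by fun_prop).continuousAt.eventually_ne (hμ i)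
  have hderiv : deriv (secularFun lam x0) =ᶠ[𝓝 μ]
      fun t => ∑ i, -2 * x0 i ^ 2 * (lam i ^ 2 / (1 + t * lam i) ^ 3) :=
    hnear.mono fun t ht => (hasDerivAt_secularFun ht).deriv
  rw [hderiv.deriv_eq]
  exact (hasDerivAt_secularFirstDeriv hμ).deriv

theorem continuousOn_secularSecondDeriv :
    ContinuousOn (secularSecondDeriv lam x0) {t | ∀ i, 0 < 1 + t * lam i} := by
  refine continuousOn_finsetSum _ fun i _ => continuousOn_const.mul ?_
  exact continuousOn_const.div (by fun_prop) fun t ht => pow_ne_zero 4 (ht i).ne'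

theorem strictAntiOn_secularSecondDeriv {i₀ : ι} (hlam : lam i₀ ≠ 0) (hx : x0 i₀ ≠ 0) :
    StrictAntiOn (secularSecondDeriv lam x0) {t | ∀ i, 0 < 1 + t * lam i} := by
  intro s hs t ht hst
  refine Finset.sum_lt_sum (fun i _ => ?_) ⟨i₀, Finset.mem_univ _, ?_⟩
  · exact mul_le_mul_of_nonneg_left
      (antitoneOn_pow_three_div_one_add_mul_pow_four _ (hs i) (ht i) hst.le) (by positivity)
  · exact mul_lt_mul_of_pos_left
      (strictAntiOn_pow_three_div_one_add_mul_pow_four hlam (hs i₀) (ht i₀) hst) (by positivity)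

theorem secularSecondDeriv_neg (t : ℝ) :
    secularSecondDeriv (-lam) x0 (-t) = -secularSecondDeriv lam x0 t := by
  simp only [secularSecondDeriv, Pi.neg_apply, ← Finset.sum_neg_distrib]
  congr 1 with i
  ring

theorem tendsto_secularSecondDeriv_atTop {i₀ : ι} (hmax : ∀ i, lam i ≤ lam i₀) (hpos : 0 < lam i₀)
    (hx : x0 i₀ ≠ 0) : Tendsto (secularSecondDeriv lam x0) (𝓝[>] (-1 / lam i₀)) atTop := by
  have hneg : -1 / lam i₀ < 0 := div_neg_of_neg_of_pos (by norm_num) hpos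
  have hnear : ∀ᶠ t in 𝓝[>] (-1 / lam i₀), t < 0 ∧ ∀ i, 0 < 1 + t * lam i := by
    filter_upwards [Ioo_mem_nhdsGT hneg] with t ⟨ht₁, ht₂⟩
    rw [div_lt_iff₀ hpos] at ht₁
    exact ⟨ht₂, fun i => by nlinarith [hmax i]⟩
  refine tendsto_sum_atTop_of_tendsto_of_eventually_ge i₀
    ((tendsto_pow_three_div_one_add_mul_pow_four hpos).const_mul_atTop (by positivity))
    fun i => ⟨6 * x0 i ^ 2 * min 0 (lam i ^ 3), hnear.mono fun t ht => ?_⟩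
  exact mul_le_mul_of_nonneg_left
    (min_zero_pow_three_le_div_one_add_mul_pow_four ht.1.le (ht.2 i)) (by positivity)

theorem tendsto_secularSecondDeriv_atBot {i₁ : ι} (hmin : ∀ i, lam i₁ ≤ lam i) (hneg : lam i₁ < 0)
    (hx : x0 i₁ ≠ 0) : Tendsto (secularSecondDeriv lam x0) (𝓝[<] (-1 / lam i₁)) atBot := by
  have h := tendsto_secularSecondDeriv_atTop (lam := -lam) (x0 := x0) (i₀ := i₁)
    (fun i => neg_le_neg (hmin i)) (neg_pos.2 hneg) hx
  rw [Pi.neg_apply, div_neg] at h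
  rw [← tendsto_neg_atTop_iff]
  convert h.comp tendsto_neg_nhdsLT using 1
  funext t
  simp [secularSecondDeriv_neg]

end Secular

theorem stmt_10_general (n : ℕ) (hn : 0 < n) (lam x0 : Fin n → ℝ)
    (hsort : ∀ i j : Fin n, i ≤ j → lam j ≤ lam i)
    (hfirst : 0 < lam ⟨0, hn⟩) (hlast : lam ⟨n - 1, Nat.sub_lt hn one_pos⟩ < 0)
    (hx0 : ∀ i, 0 < x0 i) :
    ∃! μ : ℝ, μ ∈ Set.Ioo (-1 / lam ⟨0, hn⟩) (-1 / lam ⟨n - 1, Nat.sub_lt hn one_pos⟩) ∧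
      deriv (deriv (fun t : ℝ => ∑ i, lam i * (x0 i / (1 + t * lam i)) ^ 2 - 1)) μ = 0 := by
  set i₀ : Fin n := ⟨0, hn⟩
  set i₁ : Fin n := ⟨n - 1, Nat.sub_lt hn one_pos⟩
  have hmax : ∀ i, lam i ≤ lam i₀ := fun i => hsort _ i (Fin.mk_le_mk.2 (Nat.zero_le _))
  have hmin : ∀ i, lam i₁ ≤ lam i := fun i => hsort i _ (Fin.mk_le_mk.2 (Nat.le_sub_one_of_lt i.2))
  have hsub : Ioo (-1 / lam i₀) (-1 / lam i₁) ⊆ {t | ∀ i, 0 < 1 + t * lam i} := fun μ hμ =>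
    one_add_mul_pos_of_mem_Ioo hmax hmin hfirst hlast hμ
  have hlt : -1 / lam i₀ < -1 / lam i₁ :=
    (div_neg_of_neg_of_pos (by norm_num) hfirst).trans (div_pos_of_neg_of_neg (by norm_num) hlast)
  have hderiv : ∀ ν ∈ Ioo (-1 / lam i₀) (-1 / lam i₁),
      deriv (deriv (secularFun lam x0)) ν = secularSecondDeriv lam x0 ν := fun ν hν =>
    deriv_deriv_secularFun fun i => (hsub hν i).ne'
  obtain ⟨μ, ⟨hμ, hzero⟩, huniq⟩ := existsUnique_mem_Ioo_eq_zero hlt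
    (continuousOn_secularSecondDeriv.mono hsub)
    ((strictAntiOn_secularSecondDeriv hfirst.ne' (hx0 i₀).ne').mono hsub)
    (tendsto_secularSecondDeriv_atTop hmax hfirst (hx0 i₀).ne')
    (tendsto_secularSecondDeriv_atBot hmin hlast (hx0 i₁).ne')
  refine ⟨μ, ⟨hμ, (hderiv μ hμ).trans hzero⟩, fun ν hν => huniq ν ⟨hν.1, ?_⟩⟩
  exact (hderiv ν hν.1).symm.trans hν.2

theorem stmt_10 (n : ℕ) (hn : 0 < n) (lam x0 : Fin n → ℝ)
    (hsort : ∀ i j : Fin n, i ≤ j → lam j ≤ lam i)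
    (hne : ∀ i, lam i ≠ 0)
    (hfirst : 0 < lam ⟨0, hn⟩) (hlast : lam ⟨n - 1, Nat.sub_lt hn one_pos⟩ < 0)
    (hx0 : ∀ i, 0 < x0 i) :
    ∃! μ : ℝ, μ ∈ Set.Ioo (-1 / lam ⟨0, hn⟩) (-1 / lam ⟨n - 1, Nat.sub_lt hn one_pos⟩) ∧
      deriv (deriv (fun t : ℝ => ∑ i, lam i * (x0 i / (1 + t * lam i)) ^ 2 - 1)) μ = 0 :=
  stmt_10_general n hn lam x0 hsort hfirst hlast hx0
end

section
/- Let λ ∈ ℝ^n with λ_1 > 0 and x⁰ ∈ ℝ^n with x⁰ ≥ 0 componentwise. Then there exists a global minimizer x* of ‖x − x⁰‖² over {x : Σ_i λ_i x_i² = 1} with x* ≥ 0 componentwise. -/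
/-!
Squared Euclidean distance to a closed nonempty set attains its infimum, since `ℝⁿ` is proper.
The constraint `∑ λᵢ xᵢ² = 1` only sees `|xᵢ|`, and for `x⁰ ≥ 0` replacing a minimizer `x*` by
`|x*|` can only bring it closer to `x⁰`, so `|x*|` is a nonnegative minimizer.
-/

open Metric

lemma dist_toLp_sq {ι : Type*} [Fintype ι] (x y : ι → ℝ) :
    dist (WithLp.toLp 2 x) (WithLp.toLp 2 y) ^ 2 = ∑ i, (x i - y i) ^ 2 := by
  simp only [PiLp.dist_sq_eq_of_L2, Real.dist_eq, sq_abs]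

lemma IsClosed.exists_forall_sum_sq_sub_le {ι : Type*} [Fintype ι] {S : Set (ι → ℝ)}
    (hS : IsClosed S) (hne : S.Nonempty) (y : ι → ℝ) :
    ∃ xm ∈ S, ∀ x ∈ S, ∑ i, (xm i - y i) ^ 2 ≤ ∑ i, (x i - y i) ^ 2 := by
  set T : Set (EuclideanSpace ℝ ι) := WithLp.ofLp ⁻¹' S
  have hT : IsClosed T := hS.preimage (PiLp.continuous_ofLp 2 _)
  obtain ⟨xm, hxm, hdist⟩ :=
    hT.exists_infDist_eq_dist (hne.preimage (WithLp.ofLp_surjective 2)) (WithLp.toLp 2 y)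
  refine ⟨xm.ofLp, hxm, fun x hx => ?_⟩
  have hle : dist (WithLp.toLp 2 y) xm ≤ dist (WithLp.toLp 2 y) (WithLp.toLp 2 x) :=
    hdist ▸ infDist_le_dist_of_mem (x := WithLp.toLp 2 y) (y := WithLp.toLp 2 x) hx
  rw [dist_comm, dist_comm _ (WithLp.toLp 2 x)] at hle
  rw [← dist_toLp_sq, ← dist_toLp_sq]
  exact pow_le_pow_left₀ dist_nonneg hle 2

lemma sq_abs_sub_le_sq_sub {a b : ℝ} (hb : 0 ≤ b) : (|a| - b) ^ 2 ≤ (a - b) ^ 2 := by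
  nlinarith [mul_le_mul_of_nonneg_right (le_abs_self a) hb, sq_abs a]

lemma IsClosed.exists_nonneg_forall_sum_sq_sub_le {ι : Type*} [Fintype ι] {S : Set (ι → ℝ)}
    (hS : IsClosed S) (hne : S.Nonempty) (habs : ∀ x ∈ S, (fun i => |x i|) ∈ S)
    {y : ι → ℝ} (hy : 0 ≤ y) :
    ∃ xs ∈ S, (∀ i, 0 ≤ xs i) ∧ ∀ x ∈ S, ∑ i, (xs i - y i) ^ 2 ≤ ∑ i, (x i - y i) ^ 2 := by
  obtain ⟨xm, hxm, hmin⟩ := hS.exists_forall_sum_sq_sub_le hne y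
  refine ⟨fun i => |xm i|, habs xm hxm, fun i => abs_nonneg _, fun x hx => ?_⟩
  calc ∑ i, (|xm i| - y i) ^ 2
      ≤ ∑ i, (xm i - y i) ^ 2 := Finset.sum_le_sum fun i _ => sq_abs_sub_le_sq_sub (hy i)
    _ ≤ ∑ i, (x i - y i) ^ 2 := hmin x hx

lemma exists_sum_mul_sq_eq_one {ι : Type*} [Fintype ι] [DecidableEq ι] {lam : ι → ℝ} {i₀ : ι}
    (h : 0 < lam i₀) : ∃ x : ι → ℝ, ∑ i, lam i * x i ^ 2 = 1 := by
  refine ⟨Pi.single i₀ (√(lam i₀))⁻¹, ?_⟩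
  rw [Finset.sum_eq_single i₀ (fun i _ hi => by simp [hi]) (by simp)]
  simp [inv_pow, Real.sq_sqrt h.le, h.ne']

theorem stmt_11_general (n : ℕ) (hn : 0 < n) (lam x0 : Fin n → ℝ)
    (hfirst : 0 < lam ⟨0, hn⟩) (hx0 : ∀ i, 0 ≤ x0 i) :
    ∃ xs : Fin n → ℝ, (∑ i, lam i * xs i ^ 2 = 1) ∧ (∀ i, 0 ≤ xs i) ∧
      ∀ x : Fin n → ℝ, (∑ i, lam i * x i ^ 2 = 1) →
        ∑ i, (xs i - x0 i) ^ 2 ≤ ∑ i, (x i - x0 i) ^ 2 := by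
  let S := {x : Fin n → ℝ | ∑ i, lam i * x i ^ 2 = 1}
  have hclosed : IsClosed S := isClosed_eq (by fun_prop) continuous_const
  have habs : ∀ x ∈ S, (fun i => |x i|) ∈ S := by simp [S, sq_abs]
  exact hclosed.exists_nonneg_forall_sum_sq_sub_le (exists_sum_mul_sq_eq_one hfirst) habs hx0

theorem stmt_11 (n : ℕ) (hn : 0 < n) (lam x0 : Fin n → ℝ)
    (hsort : ∀ i j : Fin n, i ≤ j → lam j ≤ lam i)
    (hfirst : 0 < lam ⟨0, hn⟩) (hx0 : ∀ i, 0 ≤ x0 i) :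
    ∃ xs : Fin n → ℝ, (∑ i, lam i * xs i ^ 2 = 1) ∧ (∀ i, 0 ≤ xs i) ∧
      ∀ x : Fin n → ℝ, (∑ i, lam i * x i ^ 2 = 1) →
        ∑ i, (xs i - x0 i) ^ 2 ≤ ∑ i, (x i - x0 i) ^ 2 :=
  stmt_11_general n hn lam x0 hfirst hx0
end
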